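/- Let s₁, …, s_n be exchangeable real-valued random variables, and let s_{new} be a further random variable such that (s₁,…,s_n,s_{new}) is exchangeable. For δ ∈ (0,1), let q be the ⌈(1−δ)(n+1)⌉-th smallest value among s₁,…,s_n (set q = +∞ if ⌈(1−δ)(n+1)⌉ > n). Then P[s_{new} ≤ q] ≥ 1 − δ. -/

import Mathlib

open MeasureTheory

/-- The `k`-th smallest value (1-indexed) among the entries of `v`, as an extended real;
`⊤` if `k` is out of range. -/
noncomputable def orderStat {n : ℕ} (v : Fin n → ℝ) (k : ℕ) : EReal :=
  if h : 1 ≤ k ∧ k ≤ n then (((v ∘ Tuple.sort v) ⟨k - 1, by omega⟩ : ℝ) : EReal) else ⊤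

/-!
Write `W = (s₁, …, sₙ, s_new)` and let the rank of an index `i` be the number of entries of `W`
strictly below `W i`. With `k = ⌈(1 - δ)(n + 1)⌉`, the event `s_new ≤ q` is exactly "the rank
of `s_new` is `< k`". For every outcome the `k` smallest entries have rank `< k`, so the `n + 1`
probabilities `P[rank i < k]` sum to at least `k`; exchangeability makes them all equal, hence
`P[s_new ≤ q] ≥ k / (n + 1) ≥ 1 - δ`. Counting strictly smaller entries makes ties harmless.
-/

open Finset ENNReal

section Combinatorics

variable {N : ℕ}

noncomputable def countBelow (w : Fin N → ℝ) (x : ℝ) : ℕ := #{j | w j < x}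

lemma countBelow_mono (w : Fin N → ℝ) : Monotone (countBelow w) := fun _ _ hxy =>
  card_le_card <| monotone_filter_right _ fun _ _ h => h.trans_le hxy

lemma countBelow_comp_perm (w : Fin N → ℝ) (σ : Equiv.Perm (Fin N)) (x : ℝ) :
    countBelow (w ∘ σ) x = countBelow w x :=
  card_equiv σ fun j => by simp

lemma countBelow_snoc_self {n : ℕ} (v : Fin n → ℝ) (y : ℝ) :
    countBelow (Fin.snoc v y : Fin (n + 1) → ℝ) y = countBelow v y := by
  simp only [countBelow, card_filter, Fin.sum_univ_castSucc, Fin.snoc_castSucc, Fin.snoc_last,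
    lt_self_iff_false, if_false, add_zero]

lemma countBelow_sort_le (w : Fin N → ℝ) (m : Fin N) :
    countBelow w (w (Tuple.sort w m)) ≤ m := by
  calc countBelow w (w (Tuple.sort w m)) ≤ #(Iio m) := by
        refine card_le_card_of_injOn (Tuple.sort w).symm (fun j hj => ?_)
          (Tuple.sort w).symm.injective.injOn
        simp only [coe_filter, mem_univ, true_and, Set.mem_ofPred_eq] at hj
        simp only [coe_Iio, Set.mem_Iio]
        by_contra! hmj
        have := Tuple.monotone_sort w hmj
        simp only [Function.comp_apply, Equiv.apply_symm_apply] at this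
        exact hj.not_ge this
    _ = m := Fin.card_Iio m

lemma le_sort_iff_countBelow_le (w : Fin N → ℝ) (x : ℝ) (m : Fin N) :
    x ≤ w (Tuple.sort w m) ↔ countBelow w x ≤ m := by
  refine ⟨fun hx => (countBelow_mono w hx).trans (countBelow_sort_le w m), fun hcount => ?_⟩
  by_contra! hx
  -- the `m + 1` smallest entries all lie below `x`
  have : #(Iic m) ≤ countBelow w x := by
    refine card_le_card_of_injOn (Tuple.sort w) (fun t ht => ?_) (Tuple.sort w).injective.injOn
    simp only [coe_Iic, Set.mem_Iic] at ht
    simpa using (Tuple.monotone_sort w ht).trans_lt hx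
  rw [Fin.card_Iic] at this
  omega

lemma succ_le_card_countBelow_le (w : Fin N → ℝ) (m : Fin N) :
    (m : ℕ) + 1 ≤ #{i | countBelow w (w i) ≤ m} := by
  rw [← Fin.card_Iic m]
  refine card_le_card_of_injOn (Tuple.sort w) (fun t ht => ?_) (Tuple.sort w).injective.injOn
  simp only [coe_Iic, Set.mem_Iic] at ht
  simpa using (countBelow_sort_le w t).trans ht

lemma measurable_countBelow_self (i : Fin N) :
    Measurable fun w : Fin N → ℝ => countBelow w (w i) := by
  simp only [countBelow, card_filter]
  exact Finset.measurable_sum _ fun j _ => Measurable.ite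
    (measurableSet_lt (measurable_pi_apply j) (measurable_pi_apply i)) measurable_const
    measurable_const

end Combinatorics

lemma coe_le_orderStat_succ_iff {n : ℕ} (v : Fin n → ℝ) (x : ℝ) (m : Fin n) :
    (x : EReal) ≤ orderStat v (m + 1) ↔ countBelow v x ≤ m := by
  rw [orderStat, dif_pos ⟨le_add_self, m.2⟩, EReal.coe_le_coe_iff, Function.comp_apply]
  exact le_sort_iff_countBelow_le v x m

lemma orderStat_of_lt {n : ℕ} (v : Fin n → ℝ) {k : ℕ} (hk : n < k) : orderStat v k = ⊤ :=
  dif_neg fun h => hk.not_ge h.2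

section Measure

variable {Ω ι α : Type*} [MeasurableSpace Ω] [MeasurableSpace α] {μ : Measure Ω}

open Classical in
lemma natCast_mul_measure_univ_le_sum [Fintype ι] {A : ι → Set Ω} (hA : ∀ i, MeasurableSet (A i))
    {k : ℕ} (hk : ∀ ω, k ≤ #{i | ω ∈ A i}) : k * μ Set.univ ≤ ∑ i, μ (A i) := by
  calc k * μ Set.univ = ∫⁻ _, (k : ℝ≥0∞) ∂μ := (lintegral_const _).symm
    _ ≤ ∫⁻ ω, ∑ i, (A i).indicator 1 ω ∂μ := lintegral_mono fun ω => by
        have hkω : (k : ℝ≥0∞) ≤ (#{i | ω ∈ A i} : ℕ) := by exact_mod_cast hk ω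
        rw [card_filter, Nat.cast_sum] at hkω
        convert hkω using 2 with i
        simp only [Set.indicator_apply, Pi.one_apply, Nat.cast_ite, Nat.cast_one, Nat.cast_zero]
    _ = ∑ i, μ (A i) := by
        rw [lintegral_finsetSum _ fun i _ => measurable_one.indicator (hA i)]
        exact sum_congr rfl fun i _ => lintegral_indicator_one (hA i)

def Exchangeable (μ : Measure Ω) (X : Ω → ι → α) : Prop :=
  ∀ σ : Equiv.Perm ι, μ.map (fun ω => X ω ∘ σ) = μ.map X

lemma Exchangeable.measure_preimage_comp_perm {X : Ω → ι → α} (hX : Exchangeable μ X)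
    (hXm : Measurable X) (σ : Equiv.Perm ι) {B : Set (ι → α)} (hB : MeasurableSet B) :
    μ ((fun ω => X ω ∘ σ) ⁻¹' B) = μ (X ⁻¹' B) := by
  have hXσ : Measurable fun ω => X ω ∘ σ :=
    measurable_pi_lambda _ fun j => (measurable_pi_apply (σ j)).comp hXm
  rw [← Measure.map_apply hXσ hB, hX σ, Measure.map_apply hXm hB]

lemma Exchangeable.succ_le_mul_measure_countBelow_le [IsProbabilityMeasure μ] {N : ℕ}
    {W : Ω → Fin N → ℝ} (hW : Exchangeable μ W) (hWm : Measurable W) (m i : Fin N) :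
    ((m : ℕ) + 1 : ℝ≥0∞) ≤ N * μ {ω | countBelow (W ω) (W ω i) ≤ m} := by
  set B : Fin N → Set (Fin N → ℝ) := fun j => {w | countBelow w (w j) ≤ m}
  have hB : ∀ j, MeasurableSet (B j) := fun j => measurable_countBelow_self j measurableSet_Iic
  have hE : ∀ j, μ (W ⁻¹' B j) = μ (W ⁻¹' B i) := fun j =>
    calc μ (W ⁻¹' B j) = μ ((fun ω => W ω ∘ Equiv.swap j i) ⁻¹' B i) := by
          congr 1; ext ω; simp [B, countBelow_comp_perm]
      _ = μ (W ⁻¹' B i) := hW.measure_preimage_comp_perm hWm _ (hB i)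
  calc ((m : ℕ) + 1 : ℝ≥0∞) = ((m + 1 : ℕ) : ℝ≥0∞) * μ Set.univ := by simp
    _ ≤ ∑ j, μ (W ⁻¹' B j) := natCast_mul_measure_univ_le_sum (fun j => hWm (hB j))
        (fun ω => by convert succ_le_card_countBelow_le (W ω) m using 3; rfl)
    _ = N * μ (W ⁻¹' B i) := by simp [hE]

end Measure

lemma ENNReal.ofReal_le_of_natCeil_le_mul {a : ℝ} {N : ℕ} (hN : N ≠ 0) {p : ℝ≥0∞}
    (h : (⌈a * N⌉₊ : ℝ≥0∞) ≤ N * p) : ENNReal.ofReal a ≤ p := by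
  refine (ENNReal.mul_le_mul_iff_left (c := N) (by simpa) (natCast_ne_top N)).mp ?_
  calc ENNReal.ofReal a * N = ENNReal.ofReal (a * N) := by
        rw [ENNReal.ofReal_mul' N.cast_nonneg, ofReal_natCast]
    _ ≤ ENNReal.ofReal ⌈a * N⌉₊ := ENNReal.ofReal_le_ofReal (Nat.le_ceil _)
    _ ≤ p * N := by rw [ofReal_natCast, mul_comm p]; exact h

/-- Conformal prediction coverage: if `(s₁,…,s_n,s_new)` is exchangeable and
`q` is the `⌈(1−δ)(n+1)⌉`-th smallest of `s₁,…,s_n` (`+∞` if out of range),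
then `P[s_new ≤ q] ≥ 1 − δ`. -/
theorem stmt_9 {Ω : Type*} [MeasurableSpace Ω] (μ : Measure Ω) [IsProbabilityMeasure μ]
    (n : ℕ) (s : Fin n → Ω → ℝ) (snew : Ω → ℝ)
    (hmeas : ∀ i, Measurable (s i)) (hmeasnew : Measurable snew)
    (hexch : ∀ σ : Equiv.Perm (Fin (n + 1)),
      Measure.map (fun ω => (Fin.snoc (fun i => s i ω) (snew ω) : Fin (n + 1) → ℝ) ∘ σ) μ =
        Measure.map (fun ω => (Fin.snoc (fun i => s i ω) (snew ω) : Fin (n + 1) → ℝ)) μ)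
    (δ : ℝ) (hδ : δ ∈ Set.Ioo (0 : ℝ) 1) :
    μ {ω | (snew ω : EReal) ≤ orderStat (fun i => s i ω) ⌈(1 - δ) * ((n : ℝ) + 1)⌉₊} ≥
      ENNReal.ofReal (1 - δ) := by
  set W : Ω → Fin (n + 1) → ℝ := fun ω => Fin.snoc (fun i => s i ω) (snew ω)
  set k := ⌈(1 - δ) * ((n : ℝ) + 1)⌉₊
  have hk : k = ⌈(1 - δ) * ((n + 1 : ℕ) : ℝ)⌉₊ := by push_cast; rfl
  rcases lt_or_ge n k with hnk | hkn
  · simp only [orderStat_of_lt _ hnk, le_top, Set.ofPred_true, measure_univ, ge_iff_le]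
    exact ENNReal.ofReal_le_one.mpr (by linarith [hδ.1])
  have hk1 : 1 ≤ k := Nat.one_le_ceil_iff.mpr (mul_pos (by linarith [hδ.2]) (by positivity))
  set m : Fin n := ⟨k - 1, by omega⟩
  have hevent : {ω | (snew ω : EReal) ≤ orderStat (fun i => s i ω) k} =
      {ω | countBelow (W ω) (W ω (Fin.last n)) ≤ (Fin.castSucc m : ℕ)} := by
    ext ω
    rw [show k = m + 1 by simp [m]; omega]
    simp [coe_le_orderStat_succ_iff, W, countBelow_snoc_self]
  have hWm : Measurable W := by
    refine measurable_pi_lambda _ fun i => Fin.lastCases ?_ (fun j => ?_) i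
    · simpa [W] using hmeasnew
    · simpa [W] using hmeas j
  have hcover := Exchangeable.succ_le_mul_measure_countBelow_le hexch hWm m.castSucc (Fin.last n)
  rw [hevent, ge_iff_le]
  refine ENNReal.ofReal_le_of_natCeil_le_mul n.succ_ne_zero ?_
  rw [← hk, show k = (m.castSucc : ℕ) + 1 by simp [m]; omega]
  exact_mod_cast hcover
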